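/- arXiv:1610.02262 — 2 statements merged into one kernel-verified Lean document; each statement's English description precedes it below -/
import Mathlib

section
/- Let h₀ : ℝ² → ℝ be a C² function and I* a point with ω := ∇h₀(I*) ≠ 0. Then the 3×3 "Arnold determinant" det [[D²h₀(I*), ∇h₀(I*)ᵀ],[∇h₀(I*), 0]] is nonzero if and only if h₀ is quasi-convex at I*, i.e. the only vector η ∈ ℝ² satisfying both ⟨∇h₀(I*), η⟩ = 0 and D²h₀(I*)(η,η) = 0 is η = 0. -/
/-- First partial derivative of `h` w.r.t. the first action. -/
noncomputable def d1 (h : ℝ → ℝ → ℝ) (x y : ℝ) : ℝ := deriv (fun s => h s y) x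
/-- First partial derivative of `h` w.r.t. the second action. -/
noncomputable def d2 (h : ℝ → ℝ → ℝ) (x y : ℝ) : ℝ := deriv (fun s => h x s) y
noncomputable def d11 (h : ℝ → ℝ → ℝ) (x y : ℝ) : ℝ := deriv (fun s => d1 h s y) x
noncomputable def d12 (h : ℝ → ℝ → ℝ) (x y : ℝ) : ℝ := deriv (fun s => d1 h x s) y
noncomputable def d21 (h : ℝ → ℝ → ℝ) (x y : ℝ) : ℝ := deriv (fun s => d2 h s y) x
noncomputable def d22 (h : ℝ → ℝ → ℝ) (x y : ℝ) : ℝ := deriv (fun s => d2 h x s) y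

/-- The Arnold determinant: determinant of the Hessian bordered by the gradient. -/
noncomputable def arnoldDet (h : ℝ → ℝ → ℝ) (x y : ℝ) : ℝ :=
  Matrix.det !![d11 h x y, d12 h x y, d1 h x y;
                d21 h x y, d22 h x y, d2 h x y;
                d1 h x y,  d2 h x y,  0]

/-- `h` is quasi-convex at `(x, y)`: the only vector `η` with `⟨∇h, η⟩ = 0` and
`D²h(η,η) = 0` is `η = 0`. -/
def QuasiConvexAt (h : ℝ → ℝ → ℝ) (x y : ℝ) : Prop :=
  ∀ η₁ η₂ : ℝ, d1 h x y * η₁ + d2 h x y * η₂ = 0 →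
    d11 h x y * η₁ ^ 2 + (d12 h x y + d21 h x y) * η₁ * η₂ + d22 h x y * η₂ ^ 2 = 0 →
    η₁ = 0 ∧ η₂ = 0

/-- for a C² function of two actions with nonvanishing gradient, the Arnold
determinant is nonzero at a point iff the function is quasi-convex there. -/
theorem arnoldDet_ne_zero_iff_quasiConvexAt
    (h : ℝ → ℝ → ℝ) (hC2 : ContDiff ℝ 2 (fun p : ℝ × ℝ => h p.1 p.2))
    (x y : ℝ) (hω : (d1 h x y, d2 h x y) ≠ (0, 0)) :
    arnoldDet h x y ≠ 0 ↔ QuasiConvexAt h x y := by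
  have hdet : arnoldDet h x y =
      -(d11 h x y * (d2 h x y)^2 - (d12 h x y + d21 h x y) * (d1 h x y) * (d2 h x y)
        + d22 h x y * (d1 h x y)^2) := by
    simp [arnoldDet, Matrix.det_fin_three]; ring
  set p := d1 h x y
  set q := d2 h x y
  set a := d11 h x y
  set b := d12 h x y
  set c := d21 h x y
  set d := d22 h x y
  have hpq : p ≠ 0 ∨ q ≠ 0 := by
    by_contra hc
    push_neg at hc
    exact hω (by simp [hc.1, hc.2])
  constructor
  · intro hne η₁ η₂ hlin hquad
    obtain ⟨t, ht1, ht2⟩ : ∃ t, η₁ = t * q ∧ η₂ = -(t * p) := by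
      rcases hpq with hp | hq
      · refine ⟨-η₂ / p, ?_, ?_⟩
        · field_simp
          nlinarith [hlin]
        · field_simp
      · refine ⟨η₁ / q, ?_, ?_⟩
        · field_simp
        · field_simp
          nlinarith [hlin]
    have ht : t = 0 := by
      by_contra htne
      apply hne
      rw [hdet]
      have h1 : t^2 * (a*q^2 - (b+c)*p*q + d*p^2) = 0 := by
        subst ht1 ht2; nlinarith [hquad]
      have ht2' : t^2 ≠ 0 := pow_ne_zero 2 htne
      have h2 : a*q^2 - (b+c)*p*q + d*p^2 = 0 :=
        (mul_eq_zero.mp h1).resolve_left ht2'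
      linarith
    subst ht
    constructor <;> simp [ht1, ht2]
  · intro hqc hdz
    rw [hdet] at hdz
    have := hqc q (-p) (by ring) (by nlinarith)
    exact hω (by simp [this.1, neg_eq_zero.mp this.2])
end

section
/- Let V(r) = k r^α with k, α ∈ ℝ, kα > 0, α + 2 > 0, r₀ > 0. Then V satisfies the fourth-order equation V⁗(r₀) = -84V'(r₀)/r₀³ + 32V''(r₀)/r₀² + 16V'''(r₀)/r₀ - 8(V''(r₀))²/(r₀V'(r₀)) + 240(V'(r₀))²/(r₀³(3V'(r₀)+r₀V''(r₀))) - 40V'(r₀)V'''(r₀)/(r₀(3V'(r₀)+r₀V''(r₀))) + 5r₀(V'''(r₀))²/(3(3V'(r₀)+r₀V''(r₀))) for every r₀ > 0 if and only if α = -1 or α = 2. -/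
/-- The fourth order condition (eq. (PotCondition)) on the potential at `r`. -/
def PotCondition (V : ℝ → ℝ) (r : ℝ) : Prop :=
  iteratedDeriv 4 V r =
    -(84 * iteratedDeriv 1 V r) / r ^ 3 + 32 * iteratedDeriv 2 V r / r ^ 2 +
      16 * iteratedDeriv 3 V r / r -
      8 * (iteratedDeriv 2 V r) ^ 2 / (r * iteratedDeriv 1 V r) +
      240 * (iteratedDeriv 1 V r) ^ 2 /
        (r ^ 3 * (3 * iteratedDeriv 1 V r + r * iteratedDeriv 2 V r)) -
      40 * iteratedDeriv 1 V r * iteratedDeriv 3 V r /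
        (r * (3 * iteratedDeriv 1 V r + r * iteratedDeriv 2 V r)) +
      5 * r * (iteratedDeriv 3 V r) ^ 2 /
        (3 * (3 * iteratedDeriv 1 V r + r * iteratedDeriv 2 V r))

lemma iter_deriv_rpow (k α : ℝ) : ∀ (n : ℕ) (x : ℝ), 0 < x →
    iteratedDeriv n (fun r : ℝ => k * r ^ α) x =
      (k * ∏ i ∈ Finset.range n, (α - i)) * x ^ (α - n) := by
  intro n
  induction n with
  | zero => intro x hx; simp
  | succ n ih =>
    intro x hx
    rw [iteratedDeriv_succ]
    have hev : iteratedDeriv n (fun r : ℝ => k * r ^ α) =ᶠ[nhds x]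
        fun y => (k * ∏ i ∈ Finset.range n, (α - i)) * y ^ (α - n) := by
      filter_upwards [Ioi_mem_nhds hx] with y hy using ih y hy
    rw [hev.deriv_eq]
    have hd : HasDerivAt (fun y : ℝ => (k * ∏ i ∈ Finset.range n, (α - i)) * y ^ (α - n))
        ((k * ∏ i ∈ Finset.range n, (α - i)) * ((α - n) * x ^ (α - n - 1))) x :=
      (Real.hasDerivAt_rpow_const (Or.inl hx.ne')).const_mul _
    rw [hd.deriv, Finset.prod_range_succ]
    push_cast
    rw [show α - ↑n - 1 = α - (↑n + 1) by ring]
    ring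

lemma pot_alg (k α u r : ℝ) (hr : r ≠ 0) (hu : u ≠ 0) (hka : k * α ≠ 0) (hα2 : α + 2 ≠ 0) :
    -(84 * (k * (α - 0) * (u * r ^ 3))) / r ^ 3 + 32 * (k * ((α - 0) * (α - 1)) * (u * r ^ 2)) / r ^ 2 +
                16 * (k * ((α - 0) * (α - 1) * (α - 2)) * (u * r)) / r -
              8 * (k * ((α - 0) * (α - 1)) * (u * r ^ 2)) ^ 2 / (r * (k * (α - 0) * (u * r ^ 3))) +
            240 * (k * (α - 0) * (u * r ^ 3)) ^ 2 /
              (r ^ 3 * (3 * (k * (α - 0) * (u * r ^ 3)) + r * (k * ((α - 0) * (α - 1)) * (u * r ^ 2)))) -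
          40 * (k * (α - 0) * (u * r ^ 3)) * (k * ((α - 0) * (α - 1) * (α - 2)) * (u * r)) /
            (r * (3 * (k * (α - 0) * (u * r ^ 3)) + r * (k * ((α - 0) * (α - 1)) * (u * r ^ 2)))) +
        5 * r * (k * ((α - 0) * (α - 1) * (α - 2)) * (u * r)) ^ 2 /
          (3 * (3 * (k * (α - 0) * (u * r ^ 3)) + r * (k * ((α - 0) * (α - 1)) * (u * r ^ 2)))) -
      k * ((α - 0) * (α - 1) * (α - 2) * (α - 3)) * u =
    2 / 3 * (k * α) * u * (α + 2) * ((α + 1) * (α - 2)) := by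
  simp only [sub_zero]
  rw [show (3:ℝ) * (k * α * (u * r ^ 3)) + r * (k * (α * (α - 1)) * (u * r ^ 2))
      = k * α * (α + 2) * u * r ^ 3 from by ring]
  have h1 : k * α * (α + 2) * u * r ^ 3 ≠ 0 := by
    apply mul_ne_zero (mul_ne_zero (mul_ne_zero hka hα2) hu) (pow_ne_zero 3 hr)
  field_simp
  ring

lemma potCondition_homogeneous_iff_aux (k α : ℝ) (hk : 0 < k * α) (hα2 : 0 < α + 2)
    (r : ℝ) (hr : 0 < r) :
    PotCondition (fun r => k * r ^ α) r ↔ (α + 1) * (α - 2) = 0 := by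
  unfold PotCondition
  rw [iter_deriv_rpow k α 1 r hr, iter_deriv_rpow k α 2 r hr, iter_deriv_rpow k α 3 r hr,
    iter_deriv_rpow k α 4 r hr]
  simp only [Finset.prod_range_succ, Finset.prod_range_zero, one_mul]
  push_cast
  have h3 : r ^ (α - 1) = r ^ (α - 4) * r ^ (3:ℕ) := by
    rw [show α - 1 = (α - 4) + (3:ℕ) by push_cast; ring, Real.rpow_add hr, Real.rpow_natCast]
  have h2 : r ^ (α - 2) = r ^ (α - 4) * r ^ (2:ℕ) := by
    rw [show α - 2 = (α - 4) + (2:ℕ) by push_cast; ring, Real.rpow_add hr, Real.rpow_natCast]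
  have h1 : r ^ (α - 3) = r ^ (α - 4) * r := by
    rw [show α - 3 = (α - 4) + 1 by ring, Real.rpow_add hr, Real.rpow_one]
  rw [h3, h2, h1]
  have hu : 0 < r ^ (α - 4) := Real.rpow_pos_of_pos hr _
  generalize r ^ (α - 4) = u at hu ⊢
  rw [eq_comm, ← sub_eq_zero, pot_alg k α u r hr.ne' hu.ne' hk.ne' hα2.ne']
  constructor
  · intro h
    have hC : (2 / 3 : ℝ) * (k * α) * u * (α + 2) ≠ 0 :=
      mul_ne_zero (mul_ne_zero (mul_ne_zero (by norm_num) hk.ne') hu.ne') hα2.ne'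
    exact (mul_eq_zero.mp h).resolve_left hC
  · intro h
    rw [h, mul_zero]

/-- the homogeneous potential `V(r) = k rᵅ` (with `kα > 0`, `α + 2 > 0`)
satisfies the fourth order equation at every `r₀ > 0` iff `α = -1` (Kepler) or `α = 2`
(harmonic). -/
theorem potCondition_homogeneous_iff (k α : ℝ) (hk : 0 < k * α) (hα : 0 < α + 2) :
    (∀ r₀ : ℝ, 0 < r₀ → PotCondition (fun r => k * r ^ α) r₀) ↔ α = -1 ∨ α = 2 := by
  constructor
  · intro h
    have h1 := (potCondition_homogeneous_iff_aux k α hk hα 1 one_pos).mp (h 1 one_pos)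
    rcases mul_eq_zero.mp h1 with h'|h'
    · left; linarith
    · right; linarith
  · intro h r₀ hr₀
    refine (potCondition_homogeneous_iff_aux k α hk hα r₀ hr₀).mpr ?_
    rcases h with h|h <;> rw [h] <;> norm_num
end
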